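/- arXiv:2505.01382 — 4 statements merged into one kernel-verified Lean document; each statement's English description precedes it below -/
import Mathlib

section
/- The reciprocal classifier probability is a martingale along the forward diffusion: for 0 ≤ τ ≤ t < 1, p_{c|X_t}(c|x)^{-1} = E[ p_{c|X_τ}(c|X_τ)^{-1} | X_t = x ], where the conditional law of X_τ given X_t = x and class c is given by Bayes' rule with the Gaussian transition kernel p_{X_t|X_τ}(x|x_τ) = (2πσ²)^{-d/2} exp(-‖x - α x_τ‖²/(2σ²)), with α = √((1-t)/(1-τ)) and σ² = (t-τ)/(1-τ). -/
open MeasureTheory Real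

/-! Given the class, the posterior of `X_τ` is `p_{τ|c} K / p_{t|c}`; multiplying by the
reciprocal classifier `p_τ / (p_{τ|c} p_c)` cancels the class-conditional density `p_{τ|c}`
and leaves `p_τ K / (p_{t|c} p_c)`, whose integral is `p_t / (p_{t|c} p_c)` because the
transition kernel does not depend on the class. -/

theorem integral_posterior_mul_inv_classifier {α : Type*} [MeasurableSpace α] {μ : Measure α}
    (p q k : α → ℝ) (a b : ℝ) (hq : ∀ᵐ y ∂μ, q y ≠ 0) :
    ∫ y, (q y * k y / a) * (q y * b / p y)⁻¹ ∂μ = (∫ y, p y * k y ∂μ) / (a * b) := by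
  have hcancel : ∀ᵐ y ∂μ, (q y * k y / a) * (q y * b / p y)⁻¹ = p y * k y / (a * b) := by
    filter_upwards [hq] with y hy
    rw [inv_div]
    field_simp
  rw [integral_congr_ae hcancel, integral_div]

theorem reciprocal_classifier_martingale_general (d : ℕ)
    (pτ pτc pt ptc : EuclideanSpace ℝ (Fin d) → ℝ) (pc : ℝ)
    (K : EuclideanSpace ℝ (Fin d) → EuclideanSpace ℝ (Fin d) → ℝ)
    (hpt : ∀ x, pt x = ∫ xτ, pτ xτ * K x xτ)
    (hpτc : ∀ x, 0 < pτc x)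
    (x : EuclideanSpace ℝ (Fin d)) :
    (ptc x * pc / pt x)⁻¹ =
      ∫ xτ, (pτc xτ * K x xτ / ptc x) * (pτc xτ * pc / pτ xτ)⁻¹ := by
  rw [inv_div, integral_posterior_mul_inv_classifier pτ pτc (K x) _ _
    (.of_forall fun y => (hpτc y).ne'), hpt x]

/-- The reciprocal classifier probability is a martingale along the forward diffusion.
Here `pτ, pτc` are the (marginal resp. class-conditional) densities of `X_τ`,
`pt, ptc` those of `X_t`, related by the Gaussian transition kernel with scaling
`α = √((1-t)/(1-τ))` and variance `σ² = (t-τ)/(1-τ)`; `pc` is the prior class probability.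
The conditional density of `X_τ` given `X_t = x` and class `c` is
`x_τ ↦ pτc x_τ · K x x_τ / ptc x` (Bayes' rule with the class-independent kernel), and the
claim is `p_{c|X_t}(c|x)⁻¹ = E[p_{c|X_τ}(c|X_τ)⁻¹ | X_t = x, c]`. -/
theorem reciprocal_classifier_martingale (d : ℕ) (τ t : ℝ) (hτ : 0 ≤ τ) (hτt : τ ≤ t)
    (ht : t < 1)
    (pτ pτc pt ptc : EuclideanSpace ℝ (Fin d) → ℝ) (pc : ℝ)
    (K : EuclideanSpace ℝ (Fin d) → EuclideanSpace ℝ (Fin d) → ℝ)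
    (hK : ∀ x xτ, K x xτ =
      (2 * π * ((t - τ) / (1 - τ))) ^ (-(d : ℝ) / 2) *
        Real.exp (-‖x - Real.sqrt ((1 - t) / (1 - τ)) • xτ‖ ^ 2 / (2 * ((t - τ) / (1 - τ)))))
    (hpt : ∀ x, pt x = ∫ xτ, pτ xτ * K x xτ)
    (hptc : ∀ x, ptc x = ∫ xτ, pτc xτ * K x xτ)
    (hpτ : ∀ x, 0 < pτ x) (hpτc : ∀ x, 0 < pτc x)
    (hpt' : ∀ x, 0 < pt x) (hptc' : ∀ x, 0 < ptc x) (hpc : 0 < pc)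
    (x : EuclideanSpace ℝ (Fin d)) :
    (ptc x * pc / pt x)⁻¹ =
      ∫ xτ, (pτc xτ * K x xτ / ptc x) * (pτc xτ * pc / pτ xτ)⁻¹ :=
  reciprocal_classifier_martingale_general d pτ pτc pt ptc pc K hpt hpτc x
end

section
/- Suppose P(‖X_0‖ < R | c) > 1/2. Then the conditional density of X_{1-t} given class c satisfies p_{X_{1-t}|c}(y|c) ≥ (1/2)(2π(1-t))^{-d/2} exp(-(‖y‖ + √t R)²/(2(1-t))) for all y ∈ ℝ^d and 0 ≤ t < 1. -/
/-! Drop the part of the integral outside the ball `‖x₀‖ < R`, where the integrand is nonnegative.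
On the ball, `‖y - √t x₀‖ ≤ ‖y‖ + √t R`, so the Gaussian kernel is at least its value at that
distance, and the ball carries mass more than `1/2`. -/

open MeasureTheory Real

theorem norm_sub_smul_le_of_norm_le {E : Type*} [SeminormedAddCommGroup E] [NormedSpace ℝ E]
    {x y : E} {a R : ℝ} (ha : 0 ≤ a) (hx : ‖x‖ ≤ R) : ‖y - a • x‖ ≤ ‖y‖ + a * R :=
  calc ‖y - a • x‖ ≤ ‖y‖ + ‖a • x‖ := norm_sub_le _ _
    _ = ‖y‖ + a * ‖x‖ := by rw [norm_smul, Real.norm_of_nonneg ha]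
    _ ≤ ‖y‖ + a * R := by gcongr

theorem setIntegral_mul_const_le_integral_mul {α : Type*} [MeasurableSpace α] {μ : Measure α}
    {f g : α → ℝ} {S : Set α} {m C : ℝ} (hS : MeasurableSet S) (hf : Integrable f μ)
    (hf0 : ∀ x, 0 ≤ f x) (hg : AEStronglyMeasurable g μ) (hg0 : ∀ x, 0 ≤ g x)
    (hgC : ∀ x, g x ≤ C) (hgm : ∀ x ∈ S, m ≤ g x) :
    (∫ x in S, f x ∂μ) * m ≤ ∫ x, f x * g x ∂μ := by
  have hfg : Integrable (fun x => f x * g x) μ :=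
    hf.mul_bdd hg (Filter.Eventually.of_forall fun x => by
      rw [Real.norm_of_nonneg (hg0 x)]; exact hgC x)
  calc (∫ x in S, f x ∂μ) * m = ∫ x in S, f x * m ∂μ := (integral_mul_const _ _).symm
    _ ≤ ∫ x in S, f x * g x ∂μ :=
      setIntegral_mono_on (hf.restrict.mul_const m) hfg.restrict hS
        fun x hx => mul_le_mul_of_nonneg_left (hgm x hx) (hf0 x)
    _ ≤ ∫ x, f x * g x ∂μ :=
      setIntegral_le_integral hfg (Filter.Eventually.of_forall fun x => mul_nonneg (hf0 x) (hg0 x))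

theorem conditional_density_lower_bound_general (d : ℕ) (t R : ℝ) (ht1 : t < 1)
    (p0c : EuclideanSpace ℝ (Fin d) → ℝ)
    (hnn : ∀ x, 0 ≤ p0c x) (hint : Integrable p0c)
    (htail : 1 / 2 < ∫ x in {x : EuclideanSpace ℝ (Fin d) | ‖x‖ < R}, p0c x)
    (y : EuclideanSpace ℝ (Fin d)) :
    (1 / 2) * (2 * π * (1 - t)) ^ (-(d : ℝ) / 2) *
        Real.exp (-(‖y‖ + Real.sqrt t * R) ^ 2 / (2 * (1 - t)))
      ≤ ∫ x, p0c x * ((2 * π * (1 - t)) ^ (-(d : ℝ) / 2) *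
          Real.exp (-‖y - Real.sqrt t • x‖ ^ 2 / (2 * (1 - t)))) := by
  have hvar : 0 < 2 * (1 - t) := by linarith
  set C := (2 * π * (1 - t)) ^ (-(d : ℝ) / 2)
  have hC : 0 ≤ C := (rpow_pos_of_pos (by nlinarith [pi_pos]) _).le
  set E := Real.exp (-(‖y‖ + Real.sqrt t * R) ^ 2 / (2 * (1 - t)))
  have hball : MeasurableSet {x : EuclideanSpace ℝ (Fin d) | ‖x‖ < R} :=
    measurableSet_lt measurable_norm measurable_const
  have hkernel := setIntegral_mul_const_le_integral_mul (m := C * E) (C := C)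
    (g := fun x => C * Real.exp (-‖y - Real.sqrt t • x‖ ^ 2 / (2 * (1 - t)))) hball hint hnn
    (by fun_prop) (fun x => by positivity)
    (fun x => mul_le_of_le_one_right hC (exp_le_one_iff.2
      (div_nonpos_of_nonpos_of_nonneg (neg_nonpos.2 (sq_nonneg _)) hvar.le)))
    (fun x hx => mul_le_mul_of_nonneg_left (exp_le_exp.2 (by
      gcongr; exact norm_sub_smul_le_of_norm_le (sqrt_nonneg t) hx.le)) hC)
  calc 1 / 2 * C * E = 1 / 2 * (C * E) := mul_assoc _ _ _
    _ ≤ (∫ x in {x : EuclideanSpace ℝ (Fin d) | ‖x‖ < R}, p0c x) * (C * E) :=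
      mul_le_mul_of_nonneg_right htail.le (by positivity)
    _ ≤ _ := hkernel

/-- If `P(‖X_0‖ < R | c) > 1/2`, then the class-conditional density of
`X_{1-t} | X_0 ~ N(√t·X_0, (1-t)·I)` satisfies the lower bound
`p_{X_{1-t}|c}(y|c) ≥ (1/2)(2π(1-t))^{-d/2} exp(-(‖y‖+√t R)²/(2(1-t)))`. -/
theorem conditional_density_lower_bound (d : ℕ) (t R : ℝ) (ht0 : 0 ≤ t) (ht1 : t < 1)
    (hR : 0 < R) (p0c : EuclideanSpace ℝ (Fin d) → ℝ)
    (hnn : ∀ x, 0 ≤ p0c x) (hint : Integrable p0c)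
    (htail : 1 / 2 < ∫ x in {x : EuclideanSpace ℝ (Fin d) | ‖x‖ < R}, p0c x)
    (y : EuclideanSpace ℝ (Fin d)) :
    (1 / 2) * (2 * π * (1 - t)) ^ (-(d : ℝ) / 2) *
        Real.exp (-(‖y‖ + Real.sqrt t * R) ^ 2 / (2 * (1 - t)))
      ≤ ∫ x, p0c x * ((2 * π * (1 - t)) ^ (-(d : ℝ) / 2) *
          Real.exp (-‖y - Real.sqrt t • x‖ ^ 2 / (2 * (1 - t)))) :=
  conditional_density_lower_bound_general d t R ht1 p0c hnn hint htail y
end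

section
/- Under the conditions P(‖X_0‖ < R | c) > 1/2 and p_c(c) > 0, the reciprocal classifier probability satisfies p_{c|X_{1-t}}(c|y)^{-1} ≤ 2 p_c(c)^{-1} exp((‖y‖ + √t R)²/(2(1-t))) for all y ∈ ℝ^d and 0 ≤ t < 1. -/
/-!
The Gaussian transition density is at most its normalising constant `C`, so `p_{X_{1-t}}(y) ≤ C`
because `p_0` has mass one. When `‖x‖ < R` it is at least `C exp(-(‖y‖ + √t R)² / (2(1-t)))`,
by the triangle inequality `‖y - √t x‖ ≤ ‖y‖ + √t R`; since `p_{0|c}` gives that ball mass more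
than `1/2`, this yields `p_{X_{1-t}|c}(y|c) ≥ (C/2) exp(-(‖y‖ + √t R)² / (2(1-t)))`. Dividing the
two bounds gives the claim.
-/

open MeasureTheory Real

section DensityBounds

variable {α : Type*} [MeasurableSpace α] {μ : Measure α} {p g : α → ℝ}

theorem integral_mul_le_of_le_const {M : ℝ} (hp : 0 ≤ p) (hpi : Integrable p μ) (hg : 0 ≤ g)
    (hgM : ∀ x, g x ≤ M) : ∫ x, p x * g x ∂μ ≤ M * ∫ x, p x ∂μ := by
  rw [← integral_const_mul]
  refine integral_mono_of_nonneg (.of_forall fun x ↦ mul_nonneg (hp x) (hg x))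
    (hpi.const_mul M) (.of_forall fun x ↦ ?_)
  simpa only [mul_comm M] using mul_le_mul_of_nonneg_left (hgM x) (hp x)

theorem const_mul_setIntegral_le_integral_mul {s : Set α} {m : ℝ} (hs : MeasurableSet s)
    (hp : 0 ≤ p) (hpi : Integrable p μ) (hg : 0 ≤ g) (hpg : Integrable (fun x ↦ p x * g x) μ)
    (hgm : ∀ x ∈ s, m ≤ g x) : m * ∫ x in s, p x ∂μ ≤ ∫ x, p x * g x ∂μ :=
  calc m * ∫ x in s, p x ∂μ = ∫ x in s, p x * m ∂μ := by
        simp only [integral_const_mul, mul_comm _ m]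
    _ ≤ ∫ x in s, p x * g x ∂μ :=
        setIntegral_mono_on (hpi.mul_const m).integrableOn hpg.integrableOn hs
          fun x hx ↦ mul_le_mul_of_nonneg_left (hgm x hx) (hp x)
    _ ≤ ∫ x, p x * g x ∂μ :=
        setIntegral_le_integral hpg (.of_forall fun x ↦ mul_nonneg (hp x) (hg x))

end DensityBounds

section TransitionDensity

variable {E : Type*} [SeminormedAddCommGroup E] [NormedSpace ℝ E] {d : ℕ} {t : ℝ}

/-- The density at `y` of `X_{1-t}` given `X_0 = x`, i.e. of `N(√t x, (1-t) I)` on `ℝ^d`. -/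
noncomputable def transitionDensity (d : ℕ) (t : ℝ) (y x : E) : ℝ :=
  (2 * π * (1 - t)) ^ (-(d : ℝ) / 2) * exp (-‖y - √t • x‖ ^ 2 / (2 * (1 - t)))

theorem transitionDensity_nonneg (ht : t ≤ 1) (y x : E) : 0 ≤ transitionDensity d t y x := by
  unfold transitionDensity
  positivity

theorem transitionDensity_le (ht : t ≤ 1) (y x : E) :
    transitionDensity d t y x ≤ (2 * π * (1 - t)) ^ (-(d : ℝ) / 2) := by
  refine mul_le_of_le_one_right (by positivity) (exp_le_one_iff.mpr ?_)
  exact div_nonpos_of_nonpos_of_nonneg (neg_nonpos.mpr (by positivity)) (by positivity)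

theorem le_transitionDensity_of_norm_le (ht : t ≤ 1) {R : ℝ} (y : E) {x : E} (hx : ‖x‖ ≤ R) :
    (2 * π * (1 - t)) ^ (-(d : ℝ) / 2) * exp (-(‖y‖ + √t * R) ^ 2 / (2 * (1 - t))) ≤
      transitionDensity d t y x := by
  have hdist : ‖y - √t • x‖ ≤ ‖y‖ + √t * R :=
    calc ‖y - √t • x‖ ≤ ‖y‖ + √t * ‖x‖ := by
          simpa only [norm_smul, norm_of_nonneg (sqrt_nonneg t)] using norm_sub_le y (√t • x)
      _ ≤ ‖y‖ + √t * R := by gcongr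
  unfold transitionDensity
  gcongr

theorem continuous_transitionDensity (y : E) : Continuous (transitionDensity d t y) := by
  unfold transitionDensity
  fun_prop

theorem MeasureTheory.Integrable.mul_transitionDensity [MeasurableSpace E]
    [OpensMeasurableSpace E] {μ : Measure E} {p : E → ℝ} (hp : Integrable p μ)
    (ht : t ≤ 1) (y : E) : Integrable (fun x ↦ p x * transitionDensity d t y x) μ :=
  hp.mul_bdd (continuous_transitionDensity y).aestronglyMeasurable (.of_forall fun x ↦ by
    rw [norm_of_nonneg (transitionDensity_nonneg ht y x)]
    exact transitionDensity_le ht y x)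

end TransitionDensity

theorem reciprocal_classifier_upper_bound_general (d : ℕ) (t R pc : ℝ) (ht1 : t < 1)
    (hpc : 0 < pc)
    (p0 p0c pt ptc : EuclideanSpace ℝ (Fin d) → ℝ)
    (hnn : ∀ x, 0 ≤ p0 x) (hint : Integrable p0) (hmass : ∫ x, p0 x = 1)
    (hnnc : ∀ x, 0 ≤ p0c x) (hintc : Integrable p0c)
    (htail : 1 / 2 < ∫ x in {x : EuclideanSpace ℝ (Fin d) | ‖x‖ < R}, p0c x)
    (hpt : ∀ y, pt y = ∫ x, p0 x * ((2 * π * (1 - t)) ^ (-(d : ℝ) / 2) *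
        Real.exp (-‖y - Real.sqrt t • x‖ ^ 2 / (2 * (1 - t)))))
    (hptc : ∀ y, ptc y = ∫ x, p0c x * ((2 * π * (1 - t)) ^ (-(d : ℝ) / 2) *
        Real.exp (-‖y - Real.sqrt t • x‖ ^ 2 / (2 * (1 - t)))))
    (y : EuclideanSpace ℝ (Fin d)) :
    (pc * ptc y / pt y)⁻¹ ≤
      2 * pc⁻¹ * Real.exp ((‖y‖ + Real.sqrt t * R) ^ 2 / (2 * (1 - t))) := by
  set C := (2 * π * (1 - t)) ^ (-(d : ℝ) / 2)
  set A := (‖y‖ + √t * R) ^ 2 / (2 * (1 - t))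
  have hC : 0 < C := by positivity
  have hpt_le : pt y ≤ C := by
    have := integral_mul_le_of_le_const hnn hint (transitionDensity_nonneg ht1.le y)
      (transitionDensity_le (d := d) ht1.le y)
    rw [hmass, mul_one] at this
    rwa [hpt y]
  have hptc_ge : C * exp (-A) * (1 / 2) ≤ ptc y :=
    calc C * exp (-A) * (1 / 2)
        ≤ C * exp (-A) * ∫ x in {x : EuclideanSpace ℝ (Fin d) | ‖x‖ < R}, p0c x := by gcongr
      _ ≤ ptc y := by
        rw [hptc y, ← neg_div]
        exact const_mul_setIntegral_le_integral_mul
          (isOpen_lt continuous_norm continuous_const).measurableSet hnnc hintc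
          (transitionDensity_nonneg ht1.le y) (hintc.mul_transitionDensity ht1.le y)
          fun x hx ↦ le_transitionDensity_of_norm_le ht1.le y (le_of_lt hx)
  calc (pc * ptc y / pt y)⁻¹ = pt y / (pc * ptc y) := inv_div _ _
    _ ≤ C / (pc * (C * exp (-A) * (1 / 2))) := by gcongr
    _ = 2 * pc⁻¹ * exp A := by rw [exp_neg]; field_simp

/-- If `P(‖X_0‖ < R | c) > 1/2` and `p_c(c) > 0`, then the reciprocal classifier
probability `p_{c|X_{1-t}}(c|y)⁻¹ = p_{X_{1-t}}(y) / (p_c(c) · p_{X_{1-t}|c}(y|c))`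
satisfies `p_{c|X_{1-t}}(c|y)⁻¹ ≤ 2 p_c(c)⁻¹ exp((‖y‖+√t R)²/(2(1-t)))`. -/
theorem reciprocal_classifier_upper_bound (d : ℕ) (t R pc : ℝ) (ht0 : 0 ≤ t) (ht1 : t < 1)
    (hR : 0 < R) (hpc : 0 < pc)
    (p0 p0c pt ptc : EuclideanSpace ℝ (Fin d) → ℝ)
    (hnn : ∀ x, 0 ≤ p0 x) (hint : Integrable p0) (hmass : ∫ x, p0 x = 1)
    (hnnc : ∀ x, 0 ≤ p0c x) (hintc : Integrable p0c)
    (htail : 1 / 2 < ∫ x in {x : EuclideanSpace ℝ (Fin d) | ‖x‖ < R}, p0c x)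
    (hpt : ∀ y, pt y = ∫ x, p0 x * ((2 * π * (1 - t)) ^ (-(d : ℝ) / 2) *
        Real.exp (-‖y - Real.sqrt t • x‖ ^ 2 / (2 * (1 - t)))))
    (hptc : ∀ y, ptc y = ∫ x, p0c x * ((2 * π * (1 - t)) ^ (-(d : ℝ) / 2) *
        Real.exp (-‖y - Real.sqrt t • x‖ ^ 2 / (2 * (1 - t)))))
    (y : EuclideanSpace ℝ (Fin d)) :
    (pc * ptc y / pt y)⁻¹ ≤
      2 * pc⁻¹ * Real.exp ((‖y‖ + Real.sqrt t * R) ^ 2 / (2 * (1 - t))) :=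
  reciprocal_classifier_upper_bound_general d t R pc ht1 hpc p0 p0c pt ptc hnn hint hmass hnnc hintc
    htail hpt hptc y
end

section
/- Suppose P(‖X_0‖ < R) > 1/2. Then there is a universal constant C such that for all 0 ≤ t < 1 and y ∈ ℝ^d, ‖∇ log p_{X_{1-t}}(y)‖₂ ≤ C·((‖y‖ + √t R)/(1-t) + d/√(1-t)). -/
/-!
Put `v = 1 - t`, `M = ‖y‖ + √t R` and `u(x) = ‖y - √t x‖`; the score is `v⁻¹` times the posterior
mean of `y - √t X₀`. The elementary bound `u e^{-u²/2v} ≤ (M + √v)(e^{-u²/2v} + e^{-M²/2v})`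
controls the unnormalised mean by `(M + √v)(Z + e^{-M²/2v})`, where `Z` is the normaliser, and
since `u ≤ M` on the ball of mass `> 1/2` we get `e^{-M²/2v} ≤ 2Z`. So the posterior mean has norm
at most `3(M + √v)`, and the score at most `3(M/v + 1/√v)`: `C = 3` works for every `d ≥ 1`, and in
dimension `0` the score vanishes.
-/

open MeasureTheory Real

lemma mul_exp_neg_sq_div_le_sqrt {v : ℝ} (hv : 0 < v) (u : ℝ) :
    u * exp (-u ^ 2 / (2 * v)) ≤ √v := by
  have hsq : u ^ 2 ≤ v * exp (u ^ 2 / v) := by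
    have := add_one_le_exp (u ^ 2 / v)
    rw [← div_le_iff₀' hv]
    linarith
  have hsq' : (u * exp (-u ^ 2 / (2 * v))) ^ 2 ≤ v := by
    have hexp : exp (-u ^ 2 / (2 * v)) ^ 2 = (exp (u ^ 2 / v))⁻¹ := by
      rw [← exp_nat_mul, ← exp_neg]; congr 1; field_simp; push_cast; ring
    rw [mul_pow, hexp, ← div_eq_mul_inv, div_le_iff₀ (exp_pos _)]
    exact hsq
  exact (le_abs_self _).trans (abs_le_sqrt hsq')

lemma mul_exp_neg_sq_div_le {v M : ℝ} (hv : 0 < v) (hM : 0 ≤ M) (u : ℝ) :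
    u * exp (-u ^ 2 / (2 * v)) ≤
      (M + √v) * (exp (-u ^ 2 / (2 * v)) + exp (-M ^ 2 / (2 * v))) := by
  have hsqrt := sqrt_nonneg v
  have hu := exp_pos (-u ^ 2 / (2 * v))
  have hM' := exp_pos (-M ^ 2 / (2 * v))
  rcases le_or_gt u M with huM | hMu
  · nlinarith
  -- for `u > M`, `u² ≥ M² + (u - M)²` splits the Gaussian factor into two
  have hsplit : exp (-u ^ 2 / (2 * v)) ≤
      exp (-M ^ 2 / (2 * v)) * exp (-(u - M) ^ 2 / (2 * v)) := by
    rw [← exp_add, exp_le_exp, ← add_div, div_le_div_iff_of_pos_right (by positivity)]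
    nlinarith
  have htail := mul_exp_neg_sq_div_le_sqrt hv (u - M)
  have hle1 : exp (-(u - M) ^ 2 / (2 * v)) ≤ 1 := by
    rw [exp_le_one_iff]; exact div_nonpos_of_nonpos_of_nonneg (by nlinarith) (by positivity)
  calc u * exp (-u ^ 2 / (2 * v))
      ≤ exp (-M ^ 2 / (2 * v)) * ((u - M) * exp (-(u - M) ^ 2 / (2 * v)) +
          M * exp (-(u - M) ^ 2 / (2 * v))) := by
        nlinarith [mul_le_mul_of_nonneg_left hsplit (hM.trans hMu.le)]
    _ ≤ exp (-M ^ 2 / (2 * v)) * (√v + M) :=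
        mul_le_mul_of_nonneg_left (add_le_add htail (mul_le_of_le_one_right hM hle1)) hM'.le
    _ ≤ (M + √v) * (exp (-u ^ 2 / (2 * v)) + exp (-M ^ 2 / (2 * v))) := by nlinarith

section GaussianWeight

variable {E F : Type*} [MeasurableSpace E] {μ : Measure E} [NormedAddCommGroup F]
  {p : E → ℝ} {f : E → F} {v M : ℝ} {B : Set E}

lemma integrable_mul_exp_neg_norm_sq_div (hv : 0 < v) (hp : Integrable p μ)
    (hf : AEStronglyMeasurable f μ) :
    Integrable (fun x ↦ p x * exp (-‖f x‖ ^ 2 / (2 * v))) μ := by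
  refine hp.mul_bdd (c := 1) ?_ (ae_of_all _ fun x ↦ ?_)
  · fun_prop
  · rw [norm_of_nonneg (exp_pos _).le, exp_le_one_iff]
    exact div_nonpos_of_nonpos_of_nonneg (by nlinarith [sq_nonneg ‖f x‖]) (by positivity)

lemma exp_neg_sq_div_mul_integral_le (hv : 0 < v) (hp0 : ∀ x, 0 ≤ p x) (hp : Integrable p μ)
    (hf : AEStronglyMeasurable f μ) (hBm : MeasurableSet B) (hfB : ∀ x ∈ B, ‖f x‖ ≤ M)
    (hB : ∫ x, p x ∂μ ≤ 2 * ∫ x in B, p x ∂μ) :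
    exp (-M ^ 2 / (2 * v)) * ∫ x, p x ∂μ ≤ 2 * ∫ x, p x * exp (-‖f x‖ ^ 2 / (2 * v)) ∂μ := by
  have hw := integrable_mul_exp_neg_norm_sq_div hv hp hf
  have hBw : exp (-M ^ 2 / (2 * v)) * ∫ x in B, p x ∂μ ≤
      ∫ x in B, p x * exp (-‖f x‖ ^ 2 / (2 * v)) ∂μ := by
    rw [← integral_const_mul]
    refine setIntegral_mono_on (hp.const_mul _).integrableOn hw.integrableOn hBm fun x hx ↦ ?_
    rw [mul_comm]
    gcongr
    · exact hp0 x
    · exact hfB x hx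
  have hBle : ∫ x in B, p x * exp (-‖f x‖ ^ 2 / (2 * v)) ∂μ ≤
      ∫ x, p x * exp (-‖f x‖ ^ 2 / (2 * v)) ∂μ :=
    setIntegral_le_integral hw (ae_of_all _ fun x ↦ mul_nonneg (hp0 x) (exp_pos _).le)
  nlinarith [exp_pos (-M ^ 2 / (2 * v))]

lemma norm_integral_smul_div_integral_le [NormedSpace ℝ F] (hv : 0 < v) (hM : 0 ≤ M)
    (hp0 : ∀ x, 0 ≤ p x) (hp : Integrable p μ) (hf : AEStronglyMeasurable f μ)
    (hBm : MeasurableSet B) (hfB : ∀ x ∈ B, ‖f x‖ ≤ M)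
    (hB : ∫ x, p x ∂μ ≤ 2 * ∫ x in B, p x ∂μ) :
    ‖∫ x, (p x * exp (-‖f x‖ ^ 2 / (2 * v)) /
        ∫ x', p x' * exp (-‖f x'‖ ^ 2 / (2 * v)) ∂μ) • f x ∂μ‖ ≤ 3 * (M + √v) := by
  set w : E → ℝ := fun x ↦ exp (-‖f x‖ ^ 2 / (2 * v))
  set Z := ∫ x, p x * w x ∂μ
  set eM := exp (-M ^ 2 / (2 * v))
  have hw := integrable_mul_exp_neg_norm_sq_div hv hp hf
  have hZ0 : 0 ≤ Z := integral_nonneg fun x ↦ mul_nonneg (hp0 x) (exp_pos _).le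
  have hmass := exp_neg_sq_div_mul_integral_le hv hp0 hp hf hBm hfB hB
  have hpt : ∀ x, ‖(p x * w x / Z) • f x‖ ≤ Z⁻¹ * ((M + √v) * (p x * w x + eM * p x)) := by
    intro x
    rw [norm_smul, norm_of_nonneg (div_nonneg (mul_nonneg (hp0 x) (exp_pos _).le) hZ0),
      div_eq_inv_mul, mul_assoc]
    refine mul_le_mul_of_nonneg_left ?_ (inv_nonneg.mpr hZ0)
    calc p x * w x * ‖f x‖ = p x * (‖f x‖ * w x) := by ring
      _ ≤ p x * ((M + √v) * (w x + eM)) :=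
        mul_le_mul_of_nonneg_left (mul_exp_neg_sq_div_le hv hM _) (hp0 x)
      _ = (M + √v) * (p x * w x + eM * p x) := by ring
  calc ‖∫ x, (p x * w x / Z) • f x ∂μ‖
      ≤ ∫ x, Z⁻¹ * ((M + √v) * (p x * w x + eM * p x)) ∂μ :=
        (norm_integral_le_integral_norm _).trans <| integral_mono_of_nonneg
          (ae_of_all _ fun _ ↦ norm_nonneg _)
          (((hw.add (hp.const_mul eM)).const_mul _).const_mul _) (ae_of_all _ hpt)
    _ = Z⁻¹ * ((M + √v) * (Z + eM * ∫ x, p x ∂μ)) := by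
        rw [integral_const_mul, integral_const_mul, integral_add hw (hp.const_mul eM),
          integral_const_mul]
    _ ≤ Z⁻¹ * ((M + √v) * (3 * Z)) := by gcongr; linarith
    _ = 3 * (M + √v) * (Z⁻¹ * Z) := by ring
    -- `Z⁻¹ * Z ≤ 1` also holds for `Z = 0`, so the normaliser need not be shown positive
    _ ≤ 3 * (M + √v) := mul_le_of_le_one_right (by positivity) (inv_mul_le_one)

lemma integral_smul_div_integral_mul_const_mul [NormedSpace ℝ F] {c : ℝ} (hc : c ≠ 0)
    (p w : E → ℝ) (f : E → F) :
    ∫ x, (p x * (c * w x) / ∫ x', p x' * (c * w x') ∂μ) • f x ∂μ =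
      ∫ x, (p x * w x / ∫ x', p x' * w x' ∂μ) • f x ∂μ := by
  simp_rw [mul_left_comm _ c, integral_const_mul, mul_div_mul_left _ _ hc]

end GaussianWeight

/-- If `P(‖X_0‖ < R) > 1/2`, there is a universal constant `C` such that for all
`0 ≤ t < 1` and `y`, the score (written as the posterior mean
`-E[(y-√t X_0)/(1-t) | X_{1-t}=y]`) of the noised density satisfies
`‖∇ log p_{X_{1-t}}(y)‖ ≤ C((‖y‖+√t R)/(1-t) + d/√(1-t))`. -/
theorem score_norm_bound :
    ∃ C : ℝ, 0 < C ∧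
      ∀ (d : ℕ) (R : ℝ) (p0 : EuclideanSpace ℝ (Fin d) → ℝ),
        0 < R →
        (∀ x, 0 ≤ p0 x) → Integrable p0 → (∫ x, p0 x) = 1 →
        (1 / 2 < ∫ x in {x : EuclideanSpace ℝ (Fin d) | ‖x‖ < R}, p0 x) →
        ∀ (t : ℝ), 0 ≤ t → t < 1 →
        ∀ y : EuclideanSpace ℝ (Fin d),
          ‖-∫ x, ((p0 x * ((2 * π * (1 - t)) ^ (-(d : ℝ) / 2) *
                Real.exp (-‖y - Real.sqrt t • x‖ ^ 2 / (2 * (1 - t))))) /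
              (∫ x', p0 x' * ((2 * π * (1 - t)) ^ (-(d : ℝ) / 2) *
                Real.exp (-‖y - Real.sqrt t • x'‖ ^ 2 / (2 * (1 - t)))))) •
              ((1 - t)⁻¹ • (y - Real.sqrt t • x))‖
            ≤ C * ((‖y‖ + Real.sqrt t * R) / (1 - t) + d / Real.sqrt (1 - t)) := by
  refine ⟨3, by norm_num, fun d R p0 hR hp0 hp hp1 hball t ht ht1 y ↦ ?_⟩
  have hv : 0 < 1 - t := by linarith
  have hM : 0 ≤ ‖y‖ + √t * R := by positivity
  obtain rfl | hd := d.eq_zero_or_pos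
  · rw [Subsingleton.elim (-∫ _, _) 0, norm_zero]
    positivity
  have hfB : ∀ x ∈ {x : EuclideanSpace ℝ (Fin d) | ‖x‖ < R}, ‖y - √t • x‖ ≤ ‖y‖ + √t * R := by
    intro x hx
    calc ‖y - √t • x‖ ≤ ‖y‖ + ‖√t • x‖ := norm_sub_le y (√t • x)
      _ = ‖y‖ + √t * ‖x‖ := by rw [norm_smul, norm_of_nonneg (sqrt_nonneg t)]
      _ ≤ ‖y‖ + √t * R := by gcongr; exact le_of_lt hx
  have hmean := norm_integral_smul_div_integral_le hv hM hp0 hp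
    (by fun_prop : AEStronglyMeasurable (fun x ↦ y - √t • x) volume)
    (isOpen_lt continuous_norm continuous_const).measurableSet hfB (by linarith)
  simp_rw [smul_comm _ (1 - t)⁻¹]
  rw [norm_neg, integral_smul, norm_smul, norm_inv, norm_of_nonneg hv.le,
    integral_smul_div_integral_mul_const_mul (by positivity)]
  have hd1 : (1 : ℝ) ≤ d := by exact_mod_cast hd
  calc (1 - t)⁻¹ * ‖_‖ ≤ (1 - t)⁻¹ * (3 * (‖y‖ + √t * R + √(1 - t))) :=
        mul_le_mul_of_nonneg_left hmean (by positivity)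
    _ = 3 * ((‖y‖ + √t * R) / (1 - t) + 1 / √(1 - t)) := by
        rw [← sqrt_div_self']; ring
    _ ≤ 3 * ((‖y‖ + √t * R) / (1 - t) + d / √(1 - t)) := by gcongr
end
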